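/- arXiv:2508.00490 — 5 statements merged into one kernel-verified Lean document; each statement's English description precedes it below -/
import Mathlib

section
/- Let 0 < p ≤ 1 and let (M,d) be a metric space with base point 0. Then for all x, y ∈ M one has ‖δ(x) − δ(y)‖_p = d(x,y). (The canonical map δ_{p,M} : M → F_p(M) is an isometric embedding.) -/
open scoped BigOperators Classical

noncomputable section

/-- The point mass `δ(x)` in the free space construction: the indicator function of `{x}`
if `x ≠ base`, and `0` if `x = base`. -/
def freeDelta {M : Type*} (base x : M) : M → ℝ :=
  fun z => if x = base then 0 else if z = x then 1 else 0

/-- The set of admissible quantities `(∑ j |a_j|^p)^{1/p}` arising from expansions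
`μ = ∑ j a_j (δ(x_j) - δ(y_j))/d(x_j, y_j)` with all points `x_j ≠ y_j` lying in `N`. -/
def freeNormSet {M : Type*} [MetricSpace M] (base : M) (N : Set M) (p : ℝ) (μ : M → ℝ) :
    Set ℝ :=
  {r | ∃ (n : ℕ) (a : Fin n → ℝ) (x y : Fin n → M),
    (∀ j, x j ∈ N) ∧ (∀ j, y j ∈ N) ∧ (∀ j, x j ≠ y j) ∧
    μ = (fun z => ∑ j, a j *
      ((freeDelta base (x j) z - freeDelta base (y j) z) / dist (x j) (y j))) ∧
    r = (∑ j, |a j| ^ p) ^ (1 / p)}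

/-- The Lipschitz-free `p`-norm of `μ` computed with expansions supported on `N ⊆ M`. -/
def freeNormOn {M : Type*} [MetricSpace M] (base : M) (N : Set M) (p : ℝ) (μ : M → ℝ) : ℝ :=
  sInf (freeNormSet base N p μ)

/-- The Lipschitz-free `p`-norm of `μ ∈ P(M)`. -/
def freeNorm {M : Type*} [MetricSpace M] (base : M) (p : ℝ) (μ : M → ℝ) : ℝ :=
  freeNormOn base Set.univ p μ

/-!
The single-term expansion `δ(x) − δ(y) = d(x,y) · (δ(x) − δ(y)) / d(x,y)` gives
`‖δ(x) − δ(y)‖_p ≤ d(x,y)`. Conversely, pairing an arbitrary expansion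
`Σ a_j (δ(x_j) − δ(y_j)) / d(x_j,y_j)` of `δ(x) − δ(y)` with the 1-Lipschitz function
`d(·, y)` gives `d(x,y) ≤ Σ |a_j| ≤ (Σ |a_j|^p)^{1/p}`, the last step because `t ↦ t^p` is
subadditive on `[0, ∞)` for `p ≤ 1`.
-/

theorem Real.rpow_sum_le_sum_rpow {ι : Type*} (s : Finset ι) {f : ι → ℝ} (hf : ∀ i ∈ s, 0 ≤ f i)
    {p : ℝ} (hp0 : 0 < p) (hp1 : p ≤ 1) : (∑ i ∈ s, f i) ^ p ≤ ∑ i ∈ s, f i ^ p :=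
  Finset.le_sum_of_subadditive_on_pred (· ^ p) (0 ≤ ·) (by simp [Real.zero_rpow hp0.ne'])
    (fun _ _ ha hb => Real.rpow_add_le_add_rpow ha hb hp0.le hp1) (fun _ _ => add_nonneg) f hf

theorem Real.sum_le_rpow_sum_rpow {ι : Type*} (s : Finset ι) {f : ι → ℝ} (hf : ∀ i ∈ s, 0 ≤ f i)
    {p : ℝ} (hp0 : 0 < p) (hp1 : p ≤ 1) : ∑ i ∈ s, f i ≤ (∑ i ∈ s, f i ^ p) ^ (1 / p) := by
  rw [one_div, Real.le_rpow_inv_iff_of_pos (Finset.sum_nonneg hf)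
    (Finset.sum_nonneg fun i hi => Real.rpow_nonneg (hf i hi) p) hp0]
  exact Real.rpow_sum_le_sum_rpow s hf hp0 hp1

section Pairing

variable {M : Type*} (base : M)

/- Pairing with `f - f base` rather than `f` makes the identity hold also for `u = base`,
where `δ(u) = 0`. -/
theorem sum_freeDelta_mul_sub {S : Finset M} {u : M} (hu : u ∈ S) (f : M → ℝ) :
    ∑ z ∈ S, freeDelta base u z * (f z - f base) = f u - f base := by
  by_cases hb : u = base
  · simp [freeDelta, hb]
  · simp [freeDelta, hb, hu]

theorem sum_expansion_mul_sub {ι : Type*} [Fintype ι] (a c : ι → ℝ) (x y : ι → M)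
    {S : Finset M} (hx : ∀ j, x j ∈ S) (hy : ∀ j, y j ∈ S) (f : M → ℝ) :
    ∑ z ∈ S, (∑ j, a j * ((freeDelta base (x j) z - freeDelta base (y j) z) / c j)) *
      (f z - f base) = ∑ j, a j * ((f (x j) - f (y j)) / c j) := by
  simp_rw [Finset.sum_mul]
  rw [Finset.sum_comm]
  refine Finset.sum_congr rfl fun j _ => ?_
  have hsplit : ∀ z, a j * ((freeDelta base (x j) z - freeDelta base (y j) z) / c j) *
      (f z - f base) = a j / c j *
        (freeDelta base (x j) z * (f z - f base) - freeDelta base (y j) z * (f z - f base)) :=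
    fun z => by ring
  simp_rw [hsplit, ← Finset.mul_sum, Finset.sum_sub_distrib, sum_freeDelta_mul_sub base (hx j),
    sum_freeDelta_mul_sub base (hy j)]
  ring

end Pairing

section Metric

variable {M : Type*} [MetricSpace M] (base : M)

theorem abs_sum_mul_div_dist_le {ι : Type*} (s : Finset ι) (a : ι → ℝ) (x y : ι → M)
    {f : M → ℝ} (hf : LipschitzWith 1 f) :
    |∑ j ∈ s, a j * ((f (x j) - f (y j)) / dist (x j) (y j))| ≤ ∑ j ∈ s, |a j| := by
  refine (Finset.abs_sum_le_sum_abs _ _).trans (Finset.sum_le_sum fun j _ => ?_)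
  have hquot : |(f (x j) - f (y j)) / dist (x j) (y j)| ≤ 1 := by
    rw [abs_div, abs_of_nonneg dist_nonneg, ← Real.dist_eq]
    exact div_le_one_of_le₀ (by simpa using hf.dist_le_mul (x j) (y j)) dist_nonneg
  rw [abs_mul]
  exact mul_le_of_le_one_right (abs_nonneg _) hquot

theorem dist_le_sum_abs_of_delta_sub_eq {ι : Type*} [Fintype ι] {x y : M} (a : ι → ℝ)
    (xs ys : ι → M)
    (hμ : freeDelta base x - freeDelta base y = fun z => ∑ j, a j *
      ((freeDelta base (xs j) z - freeDelta base (ys j) z) / dist (xs j) (ys j))) :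
    dist x y ≤ ∑ j, |a j| := by
  set S : Finset M := insert x (insert y (Finset.univ.image xs ∪ Finset.univ.image ys))
  have hpair : ∑ z ∈ S, (freeDelta base x - freeDelta base y) z * (dist z y - dist base y) =
      dist x y := by
    simp only [Pi.sub_apply, sub_mul, Finset.sum_sub_distrib]
    rw [sum_freeDelta_mul_sub base (f := (dist · y)) (by simp [S]),
      sum_freeDelta_mul_sub base (f := (dist · y)) (by simp [S])]
    simp
  rw [hμ, sum_expansion_mul_sub base a _ xs ys (by simp [S]) (by simp [S]) (dist · y)] at hpair
  rw [← hpair]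
  exact (le_abs_self _).trans (abs_sum_mul_div_dist_le _ a xs ys (LipschitzWith.dist_left y))

theorem dist_le_of_mem_freeNormSet {N : Set M} {p : ℝ} (hp0 : 0 < p) (hp1 : p ≤ 1) {x y : M}
    {r : ℝ} (hr : r ∈ freeNormSet base N p (freeDelta base x - freeDelta base y)) :
    dist x y ≤ r := by
  obtain ⟨n, a, xs, ys, -, -, -, hμ, rfl⟩ := hr
  exact (dist_le_sum_abs_of_delta_sub_eq base a xs ys hμ).trans
    (Real.sum_le_rpow_sum_rpow _ (fun j _ => abs_nonneg (a j)) hp0 hp1)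

theorem dist_mem_freeNormSet {N : Set M} {p : ℝ} (hp : p ≠ 0) {x y : M} (hx : x ∈ N)
    (hy : y ∈ N) : dist x y ∈ freeNormSet base N p (freeDelta base x - freeDelta base y) := by
  rcases eq_or_ne x y with rfl | hxy
  · refine ⟨0, Fin.elim0, Fin.elim0, Fin.elim0, finZeroElim, finZeroElim, finZeroElim, ?_, ?_⟩
    · simp only [sub_self, Finset.univ_eq_empty, Finset.sum_empty]
      rfl
    · simp [hp]
  · refine ⟨1, fun _ => dist x y, fun _ => x, fun _ => y, fun _ => hx, fun _ => hy,
      fun _ => hxy, ?_, ?_⟩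
    · funext z
      simp only [Finset.univ_unique, Finset.sum_singleton, Pi.sub_apply]
      rw [mul_div_cancel₀ _ (dist_ne_zero.mpr hxy)]
    · simp [← Real.rpow_mul dist_nonneg, hp]

theorem freeNormOn_delta_sub {N : Set M} {p : ℝ} (hp0 : 0 < p) (hp1 : p ≤ 1) {x y : M}
    (hx : x ∈ N) (hy : y ∈ N) :
    freeNormOn base N p (freeDelta base x - freeDelta base y) = dist x y :=
  IsLeast.csInf_eq ⟨dist_mem_freeNormSet base hp0.ne' hx hy,
    fun _ => dist_le_of_mem_freeNormSet base hp0 hp1⟩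

end Metric

/-- `‖δ(x) − δ(y)‖_p = d(x,y)`: the canonical map `δ_{p,M} : M → F_p(M)`
is an isometric embedding. -/
theorem delta_isometry {M : Type*} [MetricSpace M] (base : M) (p : ℝ)
    (hp0 : 0 < p) (hp1 : p ≤ 1) (x y : M) :
    freeNorm base p (freeDelta base x - freeDelta base y) = dist x y :=
  freeNormOn_delta_sub base hp0 hp1 (Set.mem_univ x) (Set.mem_univ y)
end
end

section
/- Let 0 < p ≤ 1 and let (M,d) be a metric space with base point 0. If μ ∈ P(M) and μ ≠ 0, then ‖μ‖_p > 0. (The p-seminorm ‖·‖_p on P(M) is in fact a p-norm.) -/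
open scoped BigOperators Classical

noncomputable section

/-- Real version of `NNReal.rpow_add_le_add_rpow`. -/
lemma real_rpow_add_le_add_rpow {p : ℝ} (a b : ℝ) (ha : 0 ≤ a) (hb : 0 ≤ b)
    (hp : 0 ≤ p) (hp1 : p ≤ 1) : (a + b) ^ p ≤ a ^ p + b ^ p := by
  have h := NNReal.rpow_add_le_add_rpow a.toNNReal b.toNNReal hp hp1
  have := (NNReal.coe_le_coe).2 h
  simpa [NNReal.coe_rpow, Real.coe_toNNReal _ ha, Real.coe_toNNReal _ hb,
    Real.coe_toNNReal _ (add_nonneg ha hb)] using this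

/-- Subadditivity of `x ↦ x ^ p` over finite sums, for `0 < p ≤ 1`. -/
lemma sum_rpow_ge {ι : Type*} (s : Finset ι) (b : ι → ℝ) (hb : ∀ i, 0 ≤ b i) {p : ℝ}
    (hp0 : 0 < p) (hp1 : p ≤ 1) : (∑ i ∈ s, b i) ^ p ≤ ∑ i ∈ s, b i ^ p := by
  classical
  induction s using Finset.cons_induction with
  | empty => simp [Real.zero_rpow hp0.ne']
  | cons i s hi ih =>
    rw [Finset.sum_cons, Finset.sum_cons]
    calc (b i + ∑ j ∈ s, b j) ^ p ≤ (b i) ^ p + (∑ j ∈ s, b j) ^ p :=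
          real_rpow_add_le_add_rpow _ _ (hb i) (Finset.sum_nonneg fun j _ => hb j) hp0.le hp1
      _ ≤ (b i) ^ p + ∑ j ∈ s, b j ^ p := by linarith [ih]

/-- `∑ |a j| ≤ (∑ |a j| ^ p) ^ (1/p)` for `0 < p ≤ 1`. -/
lemma sum_abs_le_rpow {n : ℕ} (a : Fin n → ℝ) {p : ℝ} (hp0 : 0 < p) (hp1 : p ≤ 1) :
    ∑ j, |a j| ≤ (∑ j, |a j| ^ p) ^ (1 / p) := by
  have h := sum_rpow_ge Finset.univ (fun j => |a j|) (fun j => abs_nonneg _) hp0 hp1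
  have hs : 0 ≤ ∑ j, |a j| := Finset.sum_nonneg fun j _ => abs_nonneg _
  have h2 : ((∑ j, |a j|) ^ p) ^ (1 / p) ≤ (∑ j, |a j| ^ p) ^ (1 / p) :=
    Real.rpow_le_rpow (Real.rpow_nonneg hs p) h (by positivity)
  rwa [← Real.rpow_mul hs, mul_one_div, div_self hp0.ne', Real.rpow_one] at h2

/-- Summing `freeDelta base w` against a test function `f` vanishing at the base point. -/
lemma sum_freeDelta_mul {M : Type*} (base w : M) (S : Finset M) (hw : w ∈ S) (f : M → ℝ)
    (hf : f base = 0) : ∑ z ∈ S, freeDelta base w z * f z = f w := by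
  classical
  unfold freeDelta
  by_cases h : w = base
  · simp [h, hf]
  · have : ∀ z ∈ S, (if (w : M) = base then (0:ℝ) else if z = w then 1 else 0) * f z
        = if z = w then f z else 0 := by
      intro z _
      rw [if_neg h]
      split <;> simp
    rw [Finset.sum_congr rfl this, Finset.sum_ite_eq' S w f, if_pos hw]

/-- The `p`-seminorm `‖·‖_p` is a `p`-norm on `P(M)`:
`μ ≠ 0` implies `‖μ‖_p > 0`. -/
theorem freeNorm_pos_of_ne_zero {M : Type*} [MetricSpace M] (base : M) (p : ℝ)
    (hp0 : 0 < p) (hp1 : p ≤ 1)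
    (μ : M → ℝ) (hfin : (Function.support μ).Finite) (hb : μ base = 0) (hμ : μ ≠ 0) :
    0 < freeNorm base p μ := by
  classical
  -- a point where μ is nonzero
  obtain ⟨x₀, hx₀⟩ : ∃ x, μ x ≠ 0 := Function.ne_iff.1 hμ
  have hx₀b : x₀ ≠ base := fun h => hx₀ (h ▸ hb)
  set F : Finset M := hfin.toFinset with hF
  have hmemF : ∀ z, z ∈ F ↔ μ z ≠ 0 := by
    intro z; simp [hF, Function.mem_support]
  have hx₀F : x₀ ∈ F := (hmemF x₀).2 hx₀
  have hbF : base ∉ F := fun h => (hmemF base).1 h hb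
  -- the separating radius
  set T : Finset M := insert base (F.erase x₀) with hT
  have hTne : T.Nonempty := ⟨base, Finset.mem_insert_self _ _⟩
  have hx₀T : x₀ ∉ T := by
    simp [hT, hx₀b]
  set r : ℝ := T.inf' hTne (fun z => dist x₀ z) with hr
  have hrpos : 0 < r := by
    rw [hr]
    apply (Finset.lt_inf'_iff _).2
    intro z hz
    have : x₀ ≠ z := fun h => hx₀T (h ▸ hz)
    exact dist_pos.2 this
  have hrle : ∀ z ∈ T, r ≤ dist x₀ z := fun z hz => Finset.inf'_le _ hz
  -- the test function
  set f : M → ℝ := fun z => max (r - dist z x₀) 0 with hf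
  have hfnn : ∀ z, 0 ≤ f z := fun z => le_max_right _ _
  have hfbase : f base = 0 := by
    have h1 : r ≤ dist base x₀ := by
      rw [dist_comm]; exact hrle base (Finset.mem_insert_self _ _)
    exact max_eq_right (by linarith)
  have hfx₀ : f x₀ = r := by simp [hf, max_eq_left hrpos.le]
  have hfzero : ∀ z, μ z ≠ 0 → z ≠ x₀ → f z = 0 := by
    intro z hz hzx
    have hzT : z ∈ T := Finset.mem_insert_of_mem (Finset.mem_erase.2 ⟨hzx, (hmemF z).2 hz⟩)
    have h1 : r ≤ dist z x₀ := by rw [dist_comm]; exact hrle z hzT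
    exact max_eq_right (by linarith)
  have hflip : ∀ u v : M, |f u - f v| ≤ dist u v := by
    have key : ∀ u v : M, f u - f v ≤ dist u v := by
      intro u v
      have h0 : 0 ≤ f v := hfnn v
      rcases le_total (r - dist u x₀) 0 with h | h
      · have hu0 : f u = 0 := max_eq_right h
        have hd := dist_nonneg (x := u) (y := v)
        linarith
      · have hu : f u = r - dist u x₀ := max_eq_left h
        have hv : r - dist v x₀ ≤ f v := le_max_left _ _
        have htri := dist_triangle v u x₀
        rw [dist_comm v u] at htri
        linarith
    intro u v
    have h1 := key u v
    have h2 := key v u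
    rw [dist_comm v u] at h2
    exact abs_sub_le_iff.2 ⟨h1, h2⟩
  -- the positive lower bound
  set c : ℝ := |μ x₀| * r with hc
  have hcpos : 0 < c := mul_pos (abs_pos.2 hx₀) hrpos
  -- Nonemptiness of the admissible set
  have hne : (freeNormSet base Set.univ p μ).Nonempty := by
    set n : ℕ := F.card with hn
    set e : Fin n ≃ {z // z ∈ F} := F.equivFin.symm with he
    have hxb : ∀ j : Fin n, (e j : M) ≠ base := by
      intro j h
      exact hbF (h ▸ (e j).2)
    refine ⟨(∑ j : Fin n, |μ (e j) * dist (e j : M) base| ^ p) ^ (1 / p), n,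
      fun j => μ (e j) * dist (e j : M) base, fun j => (e j : M), fun _ => base,
      fun _ => trivial, fun _ => trivial, hxb, ?_, rfl⟩
    funext z
    have hdb : ∀ j : Fin n, dist (e j : M) base ≠ 0 := fun j => dist_ne_zero.2 (hxb j)
    have hterm : ∀ j : Fin n, μ (e j) * dist (e j : M) base *
        ((freeDelta base (e j : M) z - freeDelta base base z) / dist (e j : M) base)
        = μ (e j) * freeDelta base (e j : M) z := by
      intro j
      have h0 : freeDelta base base z = 0 := by simp [freeDelta]
      rw [h0, sub_zero, mul_assoc, ← mul_div_assoc, mul_div_cancel_left₀ _ (hdb j)]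
    rw [show (∑ j : Fin n, μ (e j) * dist (e j : M) base *
        ((freeDelta base (e j : M) z - freeDelta base base z) / dist (e j : M) base))
        = ∑ j : Fin n, μ (e j) * freeDelta base (e j : M) z from Finset.sum_congr rfl
        fun j _ => hterm j]
    rw [Equiv.sum_comp e (fun w : {z // z ∈ F} => μ w * freeDelta base (w : M) z)]
    rw [Finset.sum_coe_sort F (fun w => μ w * freeDelta base w z)]
    by_cases hz : z ∈ F
    · rw [Finset.sum_eq_single z (fun w hw hwz => by
        have : (w : M) ≠ base := fun h => hbF (h ▸ hw)
        simp [freeDelta, this, Ne.symm hwz]) (fun h => absurd hz h)]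
      have : (z : M) ≠ base := fun h => hbF (h ▸ hz)
      simp [freeDelta, this]
    · have hz0 : μ z = 0 := by
        by_contra h; exact hz ((hmemF z).2 h)
      rw [hz0, Finset.sum_eq_zero]
      intro w hw
      have hwb : (w : M) ≠ base := fun h => hbF (h ▸ hw)
      have hwz : z ≠ w := fun h => hz (h ▸ hw)
      simp [freeDelta, hwb, hwz]
  -- c is a lower bound
  have hlb : ∀ t ∈ freeNormSet base Set.univ p μ, c ≤ t := by
    rintro t ⟨n, a, x, y, -, -, hxy, hrep, rfl⟩
    set S : Finset M := (F ∪ Finset.image x Finset.univ) ∪ Finset.image y Finset.univ with hS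
    have hxS : ∀ j, x j ∈ S := fun j =>
      Finset.mem_union_left _ (Finset.mem_union_right _ (Finset.mem_image_of_mem x (Finset.mem_univ j)))
    have hyS : ∀ j, y j ∈ S := fun j =>
      Finset.mem_union_right _ (Finset.mem_image_of_mem y (Finset.mem_univ j))
    have hx₀S : x₀ ∈ S := Finset.mem_union_left _ (Finset.mem_union_left _ hx₀F)
    -- evaluate the pairing ∑ μ z * f z in two ways
    have hev1 : ∑ z ∈ S, μ z * f z = μ x₀ * r := by
      rw [Finset.sum_eq_single x₀ (fun z _ hz => by
        by_cases h : μ z = 0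
        · simp [h]
        · simp [hfzero z h hz]) (fun h => absurd hx₀S h), hfx₀]
    have hev2 : ∑ z ∈ S, μ z * f z
        = ∑ j, a j * ((f (x j) - f (y j)) / dist (x j) (y j)) := by
      calc ∑ z ∈ S, μ z * f z
          = ∑ z ∈ S, ∑ j, a j * ((freeDelta base (x j) z - freeDelta base (y j) z)
              / dist (x j) (y j)) * f z := by
            refine Finset.sum_congr rfl fun z _ => ?_
            rw [hrep]
            rw [Finset.sum_mul]
        _ = ∑ j, ∑ z ∈ S, a j * ((freeDelta base (x j) z - freeDelta base (y j) z)
              / dist (x j) (y j)) * f z := Finset.sum_comm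
        _ = ∑ j, a j * ((f (x j) - f (y j)) / dist (x j) (y j)) := by
            refine Finset.sum_congr rfl fun j _ => ?_
            have h1 := sum_freeDelta_mul base (x j) S (hxS j) f hfbase
            have h2 := sum_freeDelta_mul base (y j) S (hyS j) f hfbase
            have key : ∑ z ∈ S, a j * ((freeDelta base (x j) z - freeDelta base (y j) z)
                / dist (x j) (y j)) * f z
                = a j / dist (x j) (y j) *
                  ((∑ z ∈ S, freeDelta base (x j) z * f z)
                    - ∑ z ∈ S, freeDelta base (y j) z * f z) := by
              rw [← Finset.sum_sub_distrib, Finset.mul_sum]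
              exact Finset.sum_congr rfl fun z _ => by ring
            rw [key, h1, h2]
            ring
    -- bound
    have hbound : |μ x₀| * r ≤ ∑ j, |a j| := by
      have h1 : |μ x₀ * r| = |μ x₀| * r := by
        rw [abs_mul, abs_of_pos hrpos]
      calc |μ x₀| * r = |∑ j, a j * ((f (x j) - f (y j)) / dist (x j) (y j))| := by
            rw [← h1, ← hev1, hev2]
        _ ≤ ∑ j, |a j * ((f (x j) - f (y j)) / dist (x j) (y j))| :=
            Finset.abs_sum_le_sum_abs _ _
        _ ≤ ∑ j, |a j| := by
            refine Finset.sum_le_sum fun j _ => ?_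
            rw [abs_mul]
            have hd : 0 < dist (x j) (y j) := dist_pos.2 (hxy j)
            have : |(f (x j) - f (y j)) / dist (x j) (y j)| ≤ 1 := by
              rw [abs_div, abs_of_pos hd, div_le_one hd]
              exact hflip _ _
            calc |a j| * |(f (x j) - f (y j)) / dist (x j) (y j)|
                ≤ |a j| * 1 := mul_le_mul_of_nonneg_left this (abs_nonneg _)
              _ = |a j| := mul_one _
    calc c = |μ x₀| * r := hc
      _ ≤ ∑ j, |a j| := hbound
      _ ≤ (∑ j, |a j| ^ p) ^ (1 / p) := sum_abs_le_rpow a hp0 hp1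
  have : c ≤ freeNorm base p μ := le_csInf hne hlb
  linarith
end
end

section
/- Let 0 < p ≤ 1, let (M,d) be a metric space with base point 0, let X be a real vector space, and let N : X → ℝ be a p-seminorm on X (i.e., N ≥ 0, N(c·v) = |c|·N(v) for all c ∈ ℝ and v ∈ X, and N(v+w)^p ≤ N(v)^p + N(w)^p for all v, w ∈ X). Let f : M → X satisfy f(0) = 0 and N(f(x) − f(y)) ≤ L·d(x,y) for all x, y ∈ M. Then for every μ ∈ P(M), N(Σ_{x∈M} μ(x)·f(x)) ≤ L·‖μ‖_p. (Every L-Lipschitz map from M into a p-normed space that preserves the base point extends to a linear map of norm at most L on F_p(M).) -/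
/-!
Pairing with `f` is linear and sends `δ(x)` to `f x`, so an expansion
`μ = ∑ a_j (δ(x_j) - δ(y_j)) / d(x_j, y_j)` gives
`∑ μ(x) f(x) = ∑ (a_j / d(x_j, y_j)) (f(x_j) - f(y_j))`. By `p`-subadditivity and the Lipschitz
bound, `N` of this is at most `L (∑ |a_j|^p)^{1/p}`; taking the infimum over all expansions
(there is one, through the base point) gives the bound by `L ‖μ‖_p`.
-/

open scoped BigOperators Classical

noncomputable section

section FreeDelta

variable {M : Type*} (base : M)

lemma freeDelta_self : freeDelta base base = 0 := by
  funext z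
  simp [freeDelta]

lemma freeDelta_of_ne {x : M} (hx : x ≠ base) (z : M) :
    freeDelta base x z = if z = x then 1 else 0 := by
  simp [freeDelta, hx]

lemma hasFiniteSupport_freeDelta (x : M) : (freeDelta base x).HasFiniteSupport :=
  (Set.finite_singleton x).subset fun z hz => by
    by_contra hzx
    exact hz (by simp_all [freeDelta])

variable {X : Type*} [AddCommGroup X] [Module ℝ X] {f : M → X}

lemma finsum_freeDelta_smul (hf0 : f base = 0) (x : M) :
    ∑ᶠ z, freeDelta base x z • f z = f x := by
  by_cases hx : x = base
  · simp [hx, freeDelta_self, hf0]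
  · exact (finsum_eq_single _ x fun z hz => by simp [freeDelta_of_ne base hx, hz]).trans
      (by simp [freeDelta_of_ne base hx])

/-- Here `(δ(x) - δ(y)) / w` is a molecule. -/
lemma finsum_molecules_smul (hf0 : f base = 0) {ι : Type*} [Fintype ι] (a w : ι → ℝ)
    (x y : ι → M) :
    ∑ᶠ z, (∑ j, a j * ((freeDelta base (x j) z - freeDelta base (y j) z) / w j)) • f z =
      ∑ j, (a j / w j) • (f (x j) - f (y j)) := by
  have hsummand : ∀ j, (fun z => (a j * ((freeDelta base (x j) z -
      freeDelta base (y j) z) / w j)) • f z) =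
      fun z => (a j / w j) •
        (freeDelta base (x j) z • f z - freeDelta base (y j) z • f z) := by
    intro j
    funext z
    rw [smul_sub, smul_smul, smul_smul, ← sub_smul]
    ring_nf
  simp_rw [Finset.sum_smul]
  rw [finsum_sum_comm]
  · refine Finset.sum_congr rfl fun j _ => ?_
    rw [hsummand j, ← smul_finsum, finsum_sub_distrib, finsum_freeDelta_smul base hf0,
      finsum_freeDelta_smul base hf0]
    · exact (hasFiniteSupport_freeDelta base (x j)).smul_left f
    · exact (hasFiniteSupport_freeDelta base (y j)).smul_left f
  · intro j _
    rw [hsummand j]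
    exact (((hasFiniteSupport_freeDelta base (x j)).smul_left f).sub
      ((hasFiniteSupport_freeDelta base (y j)).smul_left f)).smul_right _

end FreeDelta

section PSeminorm

lemma pseminorm_sum_rpow_le {X : Type*} [AddCommMonoid X] {N : X → ℝ} {p : ℝ} (hp0 : 0 < p)
    (hNzero : N 0 = 0)
    (hNadd : ∀ v w : X, N (v + w) ^ p ≤ N v ^ p + N w ^ p) {ι : Type*} (s : Finset ι)
    (v : ι → X) : N (∑ j ∈ s, v j) ^ p ≤ ∑ j ∈ s, N (v j) ^ p := by
  induction s using Finset.cons_induction with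
  | empty => simp [hNzero, Real.zero_rpow hp0.ne']
  | cons i s hi ih =>
      rw [Finset.sum_cons, Finset.sum_cons]
      exact (hNadd _ _).trans (by linarith)

variable {X : Type*} [AddCommGroup X] [Module ℝ X] {N : X → ℝ} {p : ℝ}
variable {M : Type*} [MetricSpace M] (base : M) {f : M → X} {L : ℝ}

lemma pseminorm_finsum_molecules_le (hp0 : 0 < p) (hN0 : ∀ v, 0 ≤ N v)
    (hNsmul : ∀ (c : ℝ) (v : X), N (c • v) = |c| * N v)
    (hNadd : ∀ v w : X, N (v + w) ^ p ≤ N v ^ p + N w ^ p) (hf0 : f base = 0) (hL : 0 ≤ L)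
    (hlip : ∀ x y, N (f x - f y) ≤ L * dist x y) {ι : Type*} [Fintype ι] (a : ι → ℝ)
    (x y : ι → M) :
    N (∑ᶠ z, (∑ j, a j * ((freeDelta base (x j) z - freeDelta base (y j) z) /
      dist (x j) (y j))) • f z) ≤ L * (∑ j, |a j| ^ p) ^ (1 / p) := by
  rw [finsum_molecules_smul base hf0]
  have hmolecule : ∀ j, N ((a j / dist (x j) (y j)) • (f (x j) - f (y j))) ≤ L * |a j| := by
    intro j
    rw [hNsmul, abs_div, abs_of_nonneg dist_nonneg]
    calc |a j| / dist (x j) (y j) * N (f (x j) - f (y j))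
        ≤ |a j| / dist (x j) (y j) * (L * dist (x j) (y j)) := by gcongr; exact hlip _ _
      _ = L * |a j| * (dist (x j) (y j) / dist (x j) (y j)) := by ring
      _ ≤ L * |a j| := mul_le_of_le_one_right (by positivity) (div_self_le_one _)
  have hsum : N (∑ j, (a j / dist (x j) (y j)) • (f (x j) - f (y j))) ^ p ≤
      L ^ p * ∑ j, |a j| ^ p :=
    calc _ ≤ ∑ j, N ((a j / dist (x j) (y j)) • (f (x j) - f (y j))) ^ p :=
          pseminorm_sum_rpow_le hp0 (by simpa using hNsmul 0 0) hNadd _ _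
      _ ≤ ∑ j, (L * |a j|) ^ p :=
          Finset.sum_le_sum fun j _ => Real.rpow_le_rpow (hN0 _) (hmolecule j) hp0.le
      _ = L ^ p * ∑ j, |a j| ^ p := by
          simp_rw [Real.mul_rpow hL (abs_nonneg _), Finset.mul_sum]
  rwa [← Real.rpow_le_rpow_iff (hN0 _) (by positivity) hp0,
    Real.mul_rpow hL (by positivity), one_div, Real.rpow_inv_rpow (by positivity) hp0.ne']

end PSeminorm

section FreeNorm

variable {M : Type*} [MetricSpace M] (base : M) (p : ℝ)

lemma mem_freeNormSet_of_fintype {μ : M → ℝ} {ι : Type*} [Fintype ι] (a : ι → ℝ)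
    (x y : ι → M) (hxy : ∀ j, x j ≠ y j)
    (hμ : μ = fun z => ∑ j, a j *
      ((freeDelta base (x j) z - freeDelta base (y j) z) / dist (x j) (y j))) :
    (∑ j, |a j| ^ p) ^ (1 / p) ∈ freeNormSet base Set.univ p μ := by
  set e := Fintype.equivFin ι
  refine ⟨_, a ∘ e.symm, x ∘ e.symm, y ∘ e.symm, fun _ => trivial, fun _ => trivial,
    fun j => hxy _, ?_, ?_⟩
  · rw [hμ]
    funext z
    exact (e.symm.sum_comp _).symm
  · rw [← e.symm.sum_comp]
    rfl

/-- The canonical expansion `μ = ∑ₓ μ(x) d(x,0) (δ(x) - δ(0)) / d(x,0)`. -/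
lemma freeNormSet_nonempty (μ : M → ℝ) (hfin : (Function.support μ).Finite)
    (hb : μ base = 0) : (freeNormSet base Set.univ p μ).Nonempty := by
  have hne : ∀ w : hfin.toFinset, (w : M) ≠ base := fun w hw =>
    (hfin.mem_toFinset.1 w.2) (hw ▸ hb)
  refine ⟨_, mem_freeNormSet_of_fintype base p (fun w : hfin.toFinset => μ w * dist (w : M) base)
    (fun w => w) (fun _ => base) hne ?_⟩
  funext z
  have hterm : ∀ w : hfin.toFinset, μ w * dist (w : M) base *
      ((freeDelta base w z - freeDelta base base z) / dist (w : M) base) =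
      if (w : M) = z then μ z else 0 := by
    intro w
    have hd : dist (w : M) base ≠ 0 := dist_ne_zero.2 (hne w)
    rw [freeDelta_self, Pi.zero_apply, sub_zero, freeDelta_of_ne base (hne w)]
    by_cases h : (w : M) = z
    · subst h
      simp [hd]
    · simp [h, Ne.symm h]
  rw [Fintype.sum_congr _ _ hterm,
    Finset.sum_coe_sort hfin.toFinset (fun w => if w = z then μ z else 0), Finset.sum_ite_eq']
  split_ifs with h
  · rfl
  · simpa using h

lemma freeNormSet_nonneg (S : Set M) (μ : M → ℝ) {r : ℝ}
    (hr : r ∈ freeNormSet base S p μ) :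
    0 ≤ r := by
  obtain ⟨n, a, x, y, -, -, -, -, rfl⟩ := hr
  positivity

lemma freeNorm_zero (hp : p ≠ 0) : freeNorm base p 0 = 0 := by
  have hzero : (0 : ℝ) ∈ freeNormSet base Set.univ p 0 := by
    simpa [Real.zero_rpow (inv_ne_zero hp)] using
      mem_freeNormSet_of_fintype base p (μ := 0) (ι := Empty) Empty.elim Empty.elim Empty.elim
        (fun j => j.elim) (by funext; simp)
  exact le_antisymm (csInf_le ⟨0, fun _ => freeNormSet_nonneg base p Set.univ 0⟩ hzero)
    (le_csInf ⟨0, hzero⟩ fun _ => freeNormSet_nonneg base p Set.univ 0)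

end FreeNorm

theorem lipschitz_extension_bound_general {M : Type*} [MetricSpace M] (base : M) (p : ℝ)
    (hp0 : 0 < p)
    (X : Type*) [AddCommGroup X] [Module ℝ X] (N : X → ℝ)
    (hN0 : ∀ v, 0 ≤ N v)
    (hNsmul : ∀ (c : ℝ) (v : X), N (c • v) = |c| * N v)
    (hNadd : ∀ v w : X, N (v + w) ^ p ≤ N v ^ p + N w ^ p)
    (f : M → X) (L : ℝ) (hf0 : f base = 0)
    (hlip : ∀ x y, N (f x - f y) ≤ L * dist x y)
    (μ : M → ℝ) (hfin : (Function.support μ).Finite) (hb : μ base = 0) :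
    N (∑ᶠ x, μ x • f x) ≤ L * freeNorm base p μ := by
  rcases lt_or_ge L 0 with hL | hL
  · -- a negative Lipschitz constant forces `M = {base}`, hence `μ = 0`
    have hμ : μ = 0 := funext fun z => by
      obtain rfl : z = base := by_contra fun hz => hL.not_ge <|
        nonneg_of_mul_nonneg_left ((hN0 _).trans (hlip z base)) (dist_pos.2 hz)
      exact hb
    subst hμ
    simp [freeNorm_zero base p hp0.ne', (by simpa using hNsmul 0 0 : N 0 = 0)]
  · rw [freeNorm, freeNormOn, ← smul_eq_mul, ← Real.sInf_smul_of_nonneg hL]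
    refine le_csInf (freeNormSet_nonempty base p μ hfin hb).smul_set ?_
    rintro _ ⟨_, ⟨n, a, x, y, -, -, -, rfl, rfl⟩, rfl⟩
    exact pseminorm_finsum_molecules_le base hp0 hN0 hNsmul hNadd hf0 hL hlip a x y

/-- Every `L`-Lipschitz base-point-preserving map from `M` into a
`p`-seminormed space extends to a linear map of norm at most `L` on `F_p(M)`. -/
theorem lipschitz_extension_bound {M : Type*} [MetricSpace M] (base : M) (p : ℝ)
    (hp0 : 0 < p) (hp1 : p ≤ 1)
    (X : Type*) [AddCommGroup X] [Module ℝ X] (N : X → ℝ)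
    (hN0 : ∀ v, 0 ≤ N v)
    (hNsmul : ∀ (c : ℝ) (v : X), N (c • v) = |c| * N v)
    (hNadd : ∀ v w : X, N (v + w) ^ p ≤ N v ^ p + N w ^ p)
    (f : M → X) (L : ℝ) (hf0 : f base = 0)
    (hlip : ∀ x y, N (f x - f y) ≤ L * dist x y)
    (μ : M → ℝ) (hfin : (Function.support μ).Finite) (hb : μ base = 0) :
    N (∑ᶠ x, μ x • f x) ≤ L * freeNorm base p μ :=
  lipschitz_extension_bound_general base p hp0 X N hN0 hNsmul hNadd f L hf0 hlip μ hfin hb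
end
end

section
/- Let (M,d) be a metric space with base point 0. Then for every μ ∈ P(M), ‖μ‖_1 = sup { Σ_{x∈M} μ(x)·f(x) : f : M → ℝ, f(0) = 0, |f(x) − f(y)| ≤ d(x,y) for all x, y ∈ M }. (The Lipschitz-free norm on P(M) is dual to the space of 1-Lipschitz functions vanishing at the base point.) -/
open scoped BigOperators Classical

noncomputable section

/-!
The infimum of expansion costs is a seminorm on `P(M)`, and it is dominated by the distance on
differences `δ(x) - δ(y)`. Pairing with a `1`-Lipschitz `f` vanishing at the base point sends each
elementary molecule `(δ(x) - δ(y)) / d(x, y)` into `[-1, 1]`, so every pairing is at most `‖μ‖_1`.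
Conversely, Hahn–Banach gives a functional `g` with `g μ = ‖μ‖_1` and `|g| ≤ ‖·‖_1`; then
`f x = g (δ(x))` is `1`-Lipschitz, vanishes at the base point, and pairs with `μ` to `g μ`.
-/

theorem Seminorm.exists_dual_eq_and_abs_le {E : Type*} [AddCommGroup E] [Module ℝ E]
    (p : Seminorm ℝ E) (v : E) : ∃ g : Module.Dual ℝ E, g v = p v ∧ ∀ w, |g w| ≤ p w := by
  have hv : ∀ c : ℝ, c • v = 0 → c • p v = 0 := by
    intro c hc
    rcases smul_eq_zero.1 hc with rfl | rfl <;> simp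
  let f := LinearPMap.mkSpanSingleton' (σ := RingHom.id ℝ) v (p v) hv
  have hf : ∀ w : f.domain, f w ≤ p w := by
    rintro ⟨w, hw⟩
    obtain ⟨c, rfl⟩ := Submodule.mem_span_singleton.1 hw
    calc f ⟨c • v, hw⟩ = c * p v := LinearPMap.mkSpanSingleton'_apply v (p v) hv c hw
      _ ≤ |c| * p v := mul_le_mul_of_nonneg_right (le_abs_self c) (apply_nonneg p v)
      _ = p (c • v) := by rw [map_smul_eq_mul, Real.norm_eq_abs]
  obtain ⟨g, hgf, hgp⟩ := Module.Dual.exists_extension_of_le_seminorm_real f.domain f.toFun hf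
  exact ⟨g, (hgf ⟨v, Submodule.mem_span_singleton_self v⟩).trans
    (LinearPMap.mkSpanSingleton'_apply_self _ _ _ _), hgp⟩

section FreeSpace

variable {M : Type*} (base : M)

lemma freeDelta_apply_of_ne {x z : M} (h : z ≠ x) : freeDelta base x z = 0 := by
  simp [freeDelta, h]

lemma freeDelta_apply_base (x : M) : freeDelta base x base = 0 := by
  by_cases h : x = base <;> simp [freeDelta, h, Ne.symm]

def freeSpace : Submodule ℝ (M → ℝ) where
  carrier := {g | (Function.support g).Finite ∧ g base = 0}
  add_mem' hf hg :=
    ⟨(hf.1.union hg.1).subset (Function.support_add _ _), by simp [hf.2, hg.2]⟩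
  zero_mem' := ⟨by simp, rfl⟩
  smul_mem' c _ hf := ⟨hf.1.subset (Function.support_const_smul_subset c _), by simp [hf.2]⟩

namespace freeSpace

def delta (x : M) : freeSpace base :=
  ⟨freeDelta base x,
    (Set.finite_singleton x).subset fun _ hz => by_contra fun h => hz (freeDelta_apply_of_ne base h),
    freeDelta_apply_base base x⟩

@[simp]
lemma coe_delta (x : M) : (delta base x : M → ℝ) = freeDelta base x := rfl

@[simp]
lemma delta_base : delta base base = 0 :=
  Subtype.ext (freeDelta_self base)

lemma eq_sum_smul_delta (v : freeSpace base) {s : Finset M}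
    (hs : Function.support (v : M → ℝ) ⊆ s) : v = ∑ x ∈ s, (v : M → ℝ) x • delta base x := by
  ext z
  rw [Submodule.coe_sum, Finset.sum_apply]
  simp only [Submodule.coe_smul, coe_delta, Pi.smul_apply, smul_eq_mul]
  rw [Finset.sum_eq_single z (fun x _ hxz => by rw [freeDelta_apply_of_ne base (Ne.symm hxz),
    mul_zero]) (fun hz => by rw [Function.notMem_support.1 fun h => hz (hs h), zero_mul])]
  by_cases hz : z = base
  · subst hz
    rw [v.2.2, zero_mul]
  · simp [freeDelta, hz]

lemma span_range_delta : Submodule.span ℝ (Set.range (delta base)) = ⊤ := by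
  refine Submodule.eq_top_iff'.2 fun v => ?_
  rw [eq_sum_smul_delta base v v.2.1.coe_toFinset.symm.subset]
  exact Submodule.sum_mem _ fun x _ => Submodule.smul_mem _ _ (Submodule.subset_span ⟨x, rfl⟩)

def pairing (f : M → ℝ) : freeSpace base →ₗ[ℝ] ℝ where
  toFun v := ∑ᶠ z, (v : M → ℝ) z * f z
  map_add' u v := by
    simp only [Submodule.coe_add, Pi.add_apply, add_mul]
    exact finsum_add_distrib (u.2.1.subset (Function.support_mul_subset_left _ _))
      (v.2.1.subset (Function.support_mul_subset_left _ _))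
  map_smul' c v := by
    simp only [Submodule.coe_smul, Pi.smul_apply, smul_eq_mul, mul_assoc, RingHom.id_apply]
    exact (mul_finsum' _ c (v.2.1.subset (Function.support_mul_subset_left _ _))).symm

lemma pairing_delta {f : M → ℝ} (hf : f base = 0) (x : M) : pairing base f (delta base x) = f x := by
  by_cases hx : x = base
  · subst hx
    rw [delta_base, map_zero, hf]
  · refine (finsum_eq_single _ x fun z hz => ?_).trans ?_
    · rw [coe_delta, freeDelta_apply_of_ne base hz, zero_mul]
    · simp [freeDelta, hx]

lemma linearMap_eq_pairing (g : freeSpace base →ₗ[ℝ] ℝ) :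
    g = pairing base (fun x => g (delta base x)) :=
  LinearMap.ext_on_range (span_range_delta base) fun x =>
    (pairing_delta base (f := fun x => g (delta base x)) (by simp) x).symm

end freeSpace

end FreeSpace

namespace freeSpace

variable {M : Type*} [MetricSpace M] (base : M)

def molecule (x y : M) : freeSpace base := (dist x y)⁻¹ • (delta base x - delta base y)

def costs (v : freeSpace base) : Set ℝ :=
  {r | ∃ (n : ℕ) (a : Fin n → ℝ) (x y : Fin n → M), (∀ j, x j ≠ y j) ∧
    v = ∑ j, a j • molecule base (x j) (y j) ∧ r = ∑ j, |a j|}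

lemma freeNormSet_univ_one (v : freeSpace base) :
    freeNormSet base Set.univ 1 v = costs base v := by
  ext r
  have hsum : ∀ {n : ℕ} (a : Fin n → ℝ) (x y : Fin n → M),
      ((∑ j, a j • molecule base (x j) (y j) : freeSpace base) : M → ℝ) = fun z => ∑ j, a j *
        ((freeDelta base (x j) z - freeDelta base (y j) z) / dist (x j) (y j)) := by
    intro n a x y
    ext z
    simp [molecule, Finset.sum_apply, div_eq_inv_mul]
  simp only [freeNormSet, costs, Set.mem_univ, implies_true, true_and, Real.rpow_one, div_one,
    Set.mem_ofPred_eq, ← hsum, Subtype.ext_iff]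

lemma nonneg_of_mem_costs {v : freeSpace base} {r : ℝ} (hr : r ∈ costs base v) : 0 ≤ r := by
  obtain ⟨n, a, x, y, -, -, rfl⟩ := hr
  exact Finset.sum_nonneg fun j _ => abs_nonneg (a j)

lemma bddBelow_costs (v : freeSpace base) : BddBelow (costs base v) :=
  ⟨0, fun _ => nonneg_of_mem_costs base⟩

lemma zero_mem_costs_zero : (0 : ℝ) ∈ costs base 0 :=
  ⟨0, Fin.elim0, Fin.elim0, Fin.elim0, fun j => j.elim0, by simp, by simp⟩

lemma add_mem_costs_add {u v : freeSpace base} {r t : ℝ} (hr : r ∈ costs base u)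
    (ht : t ∈ costs base v) : r + t ∈ costs base (u + v) := by
  obtain ⟨n, a, x, y, hxy, rfl, rfl⟩ := hr
  obtain ⟨m, b, x', y', hxy', rfl, rfl⟩ := ht
  refine ⟨n + m, Fin.append a b, Fin.append x x', Fin.append y y', fun j => ?_, ?_, ?_⟩
  · cases j using Fin.addCases <;> simp [hxy, hxy']
  · simp [Fin.sum_univ_add]
  · simp [Fin.sum_univ_add]

lemma smul_mem_costs_smul {v : freeSpace base} {r : ℝ} (c : ℝ) (hr : r ∈ costs base v) :
    |c| * r ∈ costs base (c • v) := by
  obtain ⟨n, a, x, y, hxy, rfl, rfl⟩ := hr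
  refine ⟨n, fun j => c * a j, x, y, hxy, ?_, ?_⟩
  · simp [Finset.smul_sum, mul_smul]
  · simp [Finset.mul_sum, abs_mul]

lemma dist_mem_costs_delta_sub_delta {x y : M} (h : x ≠ y) :
    dist x y ∈ costs base (delta base x - delta base y) := by
  refine ⟨1, fun _ => dist x y, fun _ => x, fun _ => y, fun _ => h, ?_, ?_⟩
  · simp [molecule, smul_smul, mul_inv_cancel₀ (dist_ne_zero.2 h)]
  · simp

lemma costs_nonempty (v : freeSpace base) : (costs base v).Nonempty := by
  have hv : v ∈ Submodule.span ℝ (Set.range (delta base)) := span_range_delta base ▸ trivial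
  induction hv using Submodule.span_induction with
  | mem v hv =>
    obtain ⟨x, rfl⟩ := hv
    by_cases hx : x = base
    · exact ⟨0, by simpa [hx] using zero_mem_costs_zero base⟩
    · exact ⟨dist x base, by simpa using dist_mem_costs_delta_sub_delta base hx⟩
  | zero => exact ⟨0, zero_mem_costs_zero base⟩
  | add u v _ _ hu hv => exact ⟨_, add_mem_costs_add base hu.some_mem hv.some_mem⟩
  | smul c v _ hv => exact ⟨_, smul_mem_costs_smul base c hv.some_mem⟩

def seminorm : Seminorm ℝ (freeSpace base) :=
  Seminorm.ofSMulLE (fun v => sInf (costs base v))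
    (IsLeast.csInf_eq ⟨zero_mem_costs_zero base, fun _ => nonneg_of_mem_costs base⟩)
    (fun u v => by
      rw [← csInf_add (costs_nonempty base u) (bddBelow_costs base u) (costs_nonempty base v)
        (bddBelow_costs base v)]
      exact csInf_le_csInf (bddBelow_costs base _)
        ((costs_nonempty base u).add (costs_nonempty base v))
        (Set.add_subset_iff.2 fun _ hr _ ht => add_mem_costs_add base hr ht))
    (fun c v => by
      rw [Real.norm_eq_abs, ← smul_eq_mul, ← Real.sInf_smul_of_nonneg (abs_nonneg c)]
      exact csInf_le_csInf (bddBelow_costs base _) ((costs_nonempty base v).smul_set)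
        (Set.smul_set_subset_iff.2 fun _ hr => smul_mem_costs_smul base c hr))

lemma freeNorm_one_eq_seminorm (v : freeSpace base) : freeNorm base 1 v = seminorm base v := by
  rw [freeNorm, freeNormOn, freeNormSet_univ_one]
  rfl

lemma seminorm_delta_sub_delta_le (x y : M) :
    seminorm base (delta base x - delta base y) ≤ dist x y := by
  rcases eq_or_ne x y with rfl | h
  · rw [sub_self, map_zero]
    exact dist_nonneg
  · exact csInf_le (bddBelow_costs base _) (dist_mem_costs_delta_sub_delta base h)

lemma abs_pairing_molecule_le_one {f : M → ℝ} (hf : f base = 0)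
    (hlip : ∀ x y, |f x - f y| ≤ dist x y) (x y : M) :
    |pairing base f (molecule base x y)| ≤ 1 := by
  rw [molecule, map_smul, map_sub, pairing_delta base hf, pairing_delta base hf, smul_eq_mul,
    abs_mul, abs_inv, abs_of_nonneg dist_nonneg]
  exact inv_mul_le_one_of_le₀ (hlip x y) dist_nonneg

lemma pairing_le_seminorm {f : M → ℝ} (hf : f base = 0)
    (hlip : ∀ x y, |f x - f y| ≤ dist x y) (v : freeSpace base) :
    pairing base f v ≤ seminorm base v := by
  refine le_csInf (costs_nonempty base v) ?_
  rintro _ ⟨n, a, x, y, -, rfl, rfl⟩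
  rw [map_sum]
  refine Finset.sum_le_sum fun j _ => ?_
  calc pairing base f (a j • molecule base (x j) (y j))
      ≤ |a j| * |pairing base f (molecule base (x j) (y j))| := by
        rw [map_smul, smul_eq_mul, ← abs_mul]
        exact le_abs_self _
    _ ≤ |a j| := mul_le_of_le_one_right (abs_nonneg _)
        (abs_pairing_molecule_le_one base hf hlip (x j) (y j))

end freeSpace

open freeSpace in
/-- Duality for the free norm: `‖μ‖_1` is the supremum of the pairings
of `μ` with `1`-Lipschitz functions vanishing at the base point. -/
theorem freeNorm_one_eq_sSup_pairings {M : Type*} [MetricSpace M] (base : M)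
    (μ : M → ℝ) (hfin : (Function.support μ).Finite) (hb : μ base = 0) :
    freeNorm base 1 μ = sSup {r : ℝ | ∃ f : M → ℝ, f base = 0 ∧
      (∀ x y, |f x - f y| ≤ dist x y) ∧ r = ∑ᶠ x, μ x * f x} := by
  let v : freeSpace base := ⟨μ, hfin, hb⟩
  obtain ⟨g, hgv, hg⟩ := (seminorm base).exists_dual_eq_and_abs_le v
  let f : M → ℝ := fun x => g (delta base x)
  have hf : f base = 0 := by simp [f]
  have hlip : ∀ x y, |f x - f y| ≤ dist x y := fun x y => by
    simpa only [map_sub] using (hg _).trans (seminorm_delta_sub_delta_le base x y)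
  rw [show freeNorm base 1 μ = seminorm base v from freeNorm_one_eq_seminorm base v]
  have hgf : g = pairing base f := linearMap_eq_pairing base g
  refine (IsGreatest.csSup_eq ⟨?_, ?_⟩).symm
  · exact ⟨f, hf, hlip, by rw [← hgv, hgf]; rfl⟩
  · rintro _ ⟨f', hf', hlip', rfl⟩
    exact pairing_le_seminorm base hf' hlip' v
end
end

section
/- Let 0 < p ≤ 1, let X be a real normed space with base point 0 (the zero vector), let V ⊆ X be a linear subspace, and let P : X → X be a bounded linear projection with P(X) = V, P∘P = P, and ‖P‖ ≤ C. Then for every μ ∈ P(V) (viewed inside P(X)) one has ‖μ‖_{p,V} ≤ C·‖μ‖_{p,X}, where the free p-norms are taken with respect to the metrics induced by the norm of X on V and on X respectively. -/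
open scoped BigOperators Classical

noncomputable section

/-!
Push an expansion `μ = ∑ a_j (δ(x_j) - δ(y_j)) / d(x_j, y_j)` in `X` forward along `P`. Since `P`
fixes `0` and the support of `μ`, testing both sides against the indicator of a fibre `P⁻¹{z}`
shows that `∑ a_j (δ(P x_j) - δ(P y_j)) / d(x_j, y_j)` is still `μ`. Dropping the pairs that `P`
collapses, this is an expansion in `V` whose coefficients `a_j d(P x_j, P y_j) / d(x_j, y_j)` are
at most `‖P‖ |a_j|` in absolute value; taking infima gives the bound.
-/

open Finset NNReal Real

namespace FreeSpace

variable {M : Type*} {base : M}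

lemma freeDelta_apply_base (u : M) : freeDelta base u base = 0 := by
  unfold freeDelta
  split_ifs <;> simp_all

lemma freeDelta_apply_of_ne {z : M} (hz : z ≠ base) (u : M) :
    freeDelta base u z = if u = z then 1 else 0 := by
  unfold freeDelta
  by_cases hu : u = base
  · simp [hu, Ne.symm hz]
  · simp [hu, eq_comm]

lemma sum_mul_freeDelta {s : Finset M} {u : M} (hu : u ∈ s) (g : M → ℝ) (hg : g base = 0) :
    ∑ w ∈ s, g w * freeDelta base u w = g u := by
  by_cases h : u = base
  · simp [freeDelta, h, hg]
  · simp only [freeDelta, if_neg h, mul_ite, mul_one, mul_zero, sum_ite_eq', if_pos hu]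

def deltaComb {ι : Type*} (base : M) (t : Finset ι) (c : ι → ℝ) (x y : ι → M) : M → ℝ :=
  fun z => ∑ i ∈ t, c i * (freeDelta base (x i) z - freeDelta base (y i) z)

variable {ι : Type*} {t : Finset ι} {c : ι → ℝ} {x y : ι → M}

lemma deltaComb_apply_base : deltaComb base t c x y base = 0 := by
  simp [deltaComb, freeDelta_apply_base]

lemma sum_mul_deltaComb {s : Finset M} (hxs : ∀ i ∈ t, x i ∈ s) (hys : ∀ i ∈ t, y i ∈ s)
    (g : M → ℝ) (hg : g base = 0) :
    ∑ w ∈ s, g w * deltaComb base t c x y w = ∑ i ∈ t, c i * (g (x i) - g (y i)) := by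
  simp only [deltaComb, mul_sum]
  rw [sum_comm]
  refine sum_congr rfl fun i hi => ?_
  simp only [mul_sub, mul_left_comm (g _), sum_sub_distrib, ← mul_sum,
    sum_mul_freeDelta (hxs i hi) g hg, sum_mul_freeDelta (hys i hi) g hg]

lemma deltaComb_filter_ne [DecidablePred fun i => x i ≠ y i] :
    deltaComb base {i ∈ t | x i ≠ y i} c x y = deltaComb base t c x y := by
  funext z
  refine sum_filter_of_ne fun i _ h => ?_
  rintro hxy
  simp [hxy] at h

lemma sum_fiber_mul_eq {f : M → M} {μ : M → ℝ} (hfix : ∀ w, μ w ≠ 0 → f w = w) {s : Finset M}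
    {z : M} (hz : z ∈ s) : ∑ w ∈ s, (if f w = z then 1 else 0) * μ w = μ z := by
  rw [sum_eq_single_of_mem z hz]
  · by_cases h : μ z = 0 <;> simp [h, hfix]
  · intro w _ hwz
    by_cases h : μ w = 0
    · simp [h]
    · simp [hfix w h, hwz]

lemma deltaComb_comp_of_fixes {f : M → M} (hbase : f base = base)
    (hfix : ∀ w, deltaComb base t c x y w ≠ 0 → f w = w) :
    deltaComb base t c (f ∘ x) (f ∘ y) = deltaComb base t c x y := by
  funext z
  by_cases hz : z = base
  · subst hz
    simp only [deltaComb_apply_base]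
  set s := insert z (t.image x ∪ t.image y)
  have hxs : ∀ i ∈ t, x i ∈ s := fun i hi =>
    mem_insert_of_mem (mem_union_left _ (mem_image_of_mem x hi))
  have hys : ∀ i ∈ t, y i ∈ s := fun i hi =>
    mem_insert_of_mem (mem_union_right _ (mem_image_of_mem y hi))
  set g : M → ℝ := fun w => if f w = z then 1 else 0
  calc deltaComb base t c (f ∘ x) (f ∘ y) z = ∑ i ∈ t, c i * (g (x i) - g (y i)) := by
        simp [deltaComb, g, freeDelta_apply_of_ne hz]
    _ = ∑ w ∈ s, g w * deltaComb base t c x y w :=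
        (sum_mul_deltaComb hxs hys g (by simp [g, hbase, Ne.symm hz])).symm
    _ = deltaComb base t c x y z := sum_fiber_mul_eq hfix (mem_insert_self z _)

lemma rpow_sum_abs_le_mul {p K : ℝ} (hp : 0 < p) (hK : 0 ≤ K) {s t : Finset ι} (hts : t ⊆ s)
    {a b : ι → ℝ} (hab : ∀ i ∈ t, |b i| ≤ K * |a i|) :
    (∑ i ∈ t, |b i| ^ p) ^ (1 / p) ≤ K * (∑ i ∈ s, |a i| ^ p) ^ (1 / p) := by
  have hsum : ∑ i ∈ t, |b i| ^ p ≤ K ^ p * ∑ i ∈ s, |a i| ^ p := calc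
    _ ≤ ∑ i ∈ t, (K * |a i|) ^ p :=
        sum_le_sum fun i hi => rpow_le_rpow (abs_nonneg _) (hab i hi) hp.le
    _ ≤ ∑ i ∈ s, (K * |a i|) ^ p :=
        sum_le_sum_of_subset_of_nonneg hts fun i _ _ => by positivity
    _ = K ^ p * ∑ i ∈ s, |a i| ^ p := by
        rw [mul_sum]
        exact sum_congr rfl fun i _ => mul_rpow hK (abs_nonneg _)
  calc _ ≤ (K ^ p * ∑ i ∈ s, |a i| ^ p) ^ (1 / p) :=
        rpow_le_rpow (by positivity) hsum (by positivity)
    _ = _ := by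
        rw [mul_rpow (by positivity) (by positivity), ← rpow_mul hK, mul_one_div_cancel hp.ne',
          Real.rpow_one]

lemma sInf_le_mul_sInf {S T : Set ℝ} (hST : S ⊆ T) {K : ℝ} (hK : 0 ≤ K)
    (h : ∀ r ∈ T, sInf S ≤ K * r) : sInf S ≤ K * sInf T := by
  -- `sInf ∅ = 0`, so the empty case needs `S = ∅` as well.
  rcases T.eq_empty_or_nonempty with rfl | hT
  · simp [Set.subset_empty_iff.1 hST]
  · rw [← smul_eq_mul, ← Real.sInf_smul_of_nonneg hK]
    exact le_csInf hT.smul_set (by rintro _ ⟨r, hr, rfl⟩; exact h r hr)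

variable [MetricSpace M] {N : Set M} {p : ℝ} {μ : M → ℝ} {f : M → M} {K : ℝ≥0}

lemma freeNormSet_nonneg {r : ℝ} (hr : r ∈ freeNormSet base N p μ) : 0 ≤ r := by
  obtain ⟨n, a, x, y, -, -, -, -, rfl⟩ := hr
  positivity

lemma freeNormSet_mono {N' : Set M} (h : N ⊆ N') :
    freeNormSet base N p μ ⊆ freeNormSet base N' p μ := by
  rintro r ⟨n, a, x, y, hx, hy, hxy, hμ, hr⟩
  exact ⟨n, a, x, y, fun j => h (hx j), fun j => h (hy j), hxy, hμ, hr⟩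

lemma freeNormOn_le_of_mem {r : ℝ} (hr : r ∈ freeNormSet base N p μ) :
    freeNormOn base N p μ ≤ r :=
  csInf_le ⟨0, fun _ => freeNormSet_nonneg⟩ hr

lemma freeNorm_nonneg : 0 ≤ freeNorm base p μ :=
  Real.sInf_nonneg fun _ => freeNormSet_nonneg

lemma sum_mul_sub_freeDelta_div_dist (a : ι → ℝ) :
    (fun z => ∑ i ∈ t, a i * ((freeDelta base (x i) z - freeDelta base (y i) z) /
      dist (x i) (y i))) = deltaComb base t (fun i => a i / dist (x i) (y i)) x y := by
  funext z
  exact sum_congr rfl fun i _ => by ring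

lemma rpow_sum_mem_freeNormSet_deltaComb (hx : ∀ i ∈ t, x i ∈ N) (hy : ∀ i ∈ t, y i ∈ N)
    (hxy : ∀ i ∈ t, x i ≠ y i) :
    (∑ i ∈ t, |c i * dist (x i) (y i)| ^ p) ^ (1 / p) ∈
      freeNormSet base N p (deltaComb base t c x y) := by
  let e : Fin #t ≃ t := t.equivFin.symm
  refine ⟨#t, fun k => c (e k) * dist (x (e k)) (y (e k)), fun k => x (e k), fun k => y (e k),
    fun k => hx _ (e k).2, fun k => hy _ (e k).2, fun k => hxy _ (e k).2, ?_, ?_⟩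
  · funext z
    simp only [deltaComb]
    rw [← sum_coe_sort t, ← e.sum_comp]
    refine sum_congr rfl fun k _ => ?_
    field_simp [dist_ne_zero.2 (hxy _ (e k).2)]
  · rw [← sum_coe_sort t, ← e.sum_comp]

lemma freeNormOn_le_mul_of_mem_freeNormSet (hp : 0 < p) (hf : LipschitzWith K f)
    (hbase : f base = base) (hfN : ∀ x, f x ∈ N) (hfix : ∀ w, μ w ≠ 0 → f w = w) {r : ℝ}
    (hr : r ∈ freeNormSet base Set.univ p μ) : freeNormOn base N p μ ≤ K * r := by
  obtain ⟨n, a, x, y, -, -, hxy, rfl, rfl⟩ := hr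
  rw [sum_mul_sub_freeDelta_div_dist] at hfix ⊢
  set c := fun j => a j / dist (x j) (y j)
  have hmem := rpow_sum_mem_freeNormSet_deltaComb (base := base) (p := p) (c := c)
    (x := f ∘ x) (y := f ∘ y) (t := {j | (f ∘ x) j ≠ (f ∘ y) j}) (fun j _ => hfN _)
    (fun j _ => hfN _) (fun j hj => (mem_filter.1 hj).2)
  rw [deltaComb_filter_ne, deltaComb_comp_of_fixes hbase hfix] at hmem
  refine (freeNormOn_le_of_mem hmem).trans
    (rpow_sum_abs_le_mul hp K.2 (filter_subset _ _) fun j _ => ?_)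
  have hd : 0 < dist (x j) (y j) := dist_pos.2 (hxy j)
  calc |c j * dist (f (x j)) (f (y j))|
      = |a j| / dist (x j) (y j) * dist (f (x j)) (f (y j)) := by
        simp [c, abs_mul, abs_div, abs_of_nonneg dist_nonneg]
    _ ≤ |a j| / dist (x j) (y j) * (K * dist (x j) (y j)) := by
        gcongr
        exact hf.dist_le_mul _ _
    _ = K * |a j| := by field_simp

theorem freeNormOn_le_mul_freeNorm (hp : 0 < p) (hf : LipschitzWith K f)
    (hbase : f base = base) (hfN : ∀ x, f x ∈ N) (hfix : ∀ w, μ w ≠ 0 → f w = w) :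
    freeNormOn base N p μ ≤ K * freeNorm base p μ :=
  sInf_le_mul_sInf (freeNormSet_mono (Set.subset_univ N)) K.2 fun _ hr =>
    freeNormOn_le_mul_of_mem_freeNormSet hp hf hbase hfN hfix hr

end FreeSpace

theorem projection_subspace_norm_le_general {X : Type*} [NormedAddCommGroup X] [NormedSpace ℝ X]
    (p : ℝ) (hp0 : 0 < p)
    (V : Submodule ℝ X) (P : X →L[ℝ] X) (C : ℝ)
    (hrange : Set.range P = (V : Set X))
    (hidem : ∀ x, P (P x) = P x)
    (hnorm : ‖P‖ ≤ C)
    (μ : X → ℝ)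
    (hsupp : Function.support μ ⊆ (V : Set X)) :
    freeNormOn (0 : X) (V : Set X) p μ ≤ C * freeNorm (0 : X) p μ := by
  have hmaps : ∀ x, P x ∈ (V : Set X) := fun x => hrange ▸ Set.mem_range_self x
  have hfix : ∀ w, μ w ≠ 0 → P w = w := fun w hw => by
    obtain ⟨u, rfl⟩ := hrange ▸ hsupp hw
    exact hidem u
  calc freeNormOn (0 : X) (V : Set X) p μ ≤ ‖P‖₊ * freeNorm (0 : X) p μ :=
        FreeSpace.freeNormOn_le_mul_freeNorm hp0 P.lipschitz (map_zero P) hmaps hfix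
    _ ≤ C * freeNorm (0 : X) p μ := mul_le_mul_of_nonneg_right hnorm FreeSpace.freeNorm_nonneg

/-- If `P` is a bounded linear projection of a normed space `X` onto a
subspace `V` with `‖P‖ ≤ C`, then `‖μ‖_{p,V} ≤ C·‖μ‖_{p,X}` for every `μ ∈ P(V)`. -/
theorem projection_subspace_norm_le {X : Type*} [NormedAddCommGroup X] [NormedSpace ℝ X]
    (p : ℝ) (hp0 : 0 < p) (hp1 : p ≤ 1)
    (V : Submodule ℝ X) (P : X →L[ℝ] X) (C : ℝ)
    (hrange : Set.range P = (V : Set X))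
    (hidem : ∀ x, P (P x) = P x)
    (hnorm : ‖P‖ ≤ C)
    (μ : X → ℝ) (hfin : (Function.support μ).Finite) (h0 : μ 0 = 0)
    (hsupp : Function.support μ ⊆ (V : Set X)) :
    freeNormOn (0 : X) (V : Set X) p μ ≤ C * freeNorm (0 : X) p μ :=
  projection_subspace_norm_le_general p hp0 V P C hrange hidem hnorm μ hsupp
end
end
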